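/- Fix an integer N ≥ 2 and positive reals σ_1, …, σ_N. Define c_{k,l}(σ) := tr(ρA) − 2(ρAρ)_{kl}/ρ_{kl} for 1 ≤ k ≤ l ≤ N−1, where A is the (N−1)×(N−1) symmetric tridiagonal matrix with A_{ii} = σ_i² + σ_{i+1}², A_{i,i+1} = A_{i+1,i} = −σ_{i+1}², A_{ij} = 0 for |i−j| ≥ 2, and ρ is the (N−1)×(N−1) matrix with ρ_{ij} = 2·min(i,j)·(N − max(i,j))/N. For α ∈ ℝ^M and l = 1,…,M−1 let c_l(α) := −(2(M−1)/M)α_1² + (2(M+1)/M)·Σ_{p=2}^{l} α_p² + ((2(M−1)(M−l) − 4l)/((M−l)M))·Σ_{p=l+1}^{M} α_p², let α^← be the reversed vector, and let CP(α) := min(c_1(α), c_1(α^←), c_2(α), c_2(α^←), …, c_{M−2}(α), c_{M−2}(α^←), c_{M−1}(α)). Then min_{1 ≤ k ≤ l ≤ N−1} c_{k,l}(σ) ≥ 0 if and only if CP(σ) ≥ 0, where CP(σ) is computed with M = N and α = (σ_1,…,σ_N). -/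

import Mathlib

/-!
Let `D` be the `N × (N-1)` difference matrix, whose column `i` is `e_i - e_{i+1}`. Then
`A = Dᵀ diag(σ²) D`, and as `ρ` is symmetric, `ρAρ = (Dρ)ᵀ diag(σ²) (Dρ)` and
`tr(ρA) = tr(DρDᵀ diag(σ²))`. Since `ρ = 2 (DᵀD)⁻¹` is a discrete Green function,
`(Dρ)_{p,k} = 2·[p < k] - 2k/N` and `(DρDᵀ)_{p,p} = 2 - 2/N`, so that
`c_{k,l}(σ) = Σ_p σ_p² w_{k,l}(p)` with
`w_{k,l}(p) = 2(N+1)/N - (4/k)·[p < k] - (4/(N-l))·[p ≥ l]` (`p` counted from `0`).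
For `2 ≤ k ≤ l ≤ N-2` every weight is positive, so only the boundary coefficients `k = 1` and
`l = N-1` can be negative: they are `c_l(σ)` and, after reversing `σ`, `c_l(σ^←)`.
-/

noncomputable section

open Matrix Finset

variable {N : ℕ}

def diffMatrix (N : ℕ) : Matrix (Fin N) (Fin (N - 1)) ℝ := of fun p i =>
  if p.1 = i.1 then 1 else if p.1 = i.1 + 1 then -1 else 0

lemma diffMatrix_apply (p : Fin N) (i : Fin (N - 1)) :
    diffMatrix N p i = if p.1 = i.1 then 1 else if p.1 = i.1 + 1 then -1 else 0 := rfl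

lemma sum_diffMatrix_mul {f : ℕ → ℝ} (h0 : f 0 = 0) (hN : f N = 0) (p : Fin N) :
    ∑ i : Fin (N - 1), diffMatrix N p i * f (i.1 + 1) = f (p.1 + 1) - f p.1 := by
  have hterm : ∀ m : ℕ, (if p.1 = m then 1 else if p.1 = m + 1 then -1 else 0) * f (m + 1) =
      (if m = p.1 then f (p.1 + 1) else 0) - (if m + 1 = p.1 then f p.1 else 0) := by
    intro m
    by_cases h1 : m = p.1
    · simp [h1]
    by_cases h2 : m + 1 = p.1
    · simp [← h2]
    simp [h1, h2, Ne.symm h1, Ne.symm h2]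
  simp only [diffMatrix_apply]
  rw [Fin.sum_univ_eq_sum_range
      (fun m => (if p.1 = m then 1 else if p.1 = m + 1 then -1 else 0) * f (m + 1)),
    sum_congr rfl fun m _ => hterm m, sum_sub_distrib, sum_ite_eq']
  have hfirst : (if p.1 ∈ range (N - 1) then f (p.1 + 1) else 0) = f (p.1 + 1) := by
    split_ifs with h
    · rfl
    · rw [show p.1 + 1 = N by simp only [mem_range, not_lt] at h; omega, hN]
  have hsecond : ∑ m ∈ range (N - 1), (if m + 1 = p.1 then f p.1 else 0) = f p.1 := by
    have hshift := sum_range_succ' (fun m => if m = p.1 then f p.1 else 0) (N - 1)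
    rw [Nat.sub_add_cancel p.pos, sum_ite_eq', if_pos (mem_range.2 p.isLt)] at hshift
    have hp0 : (if 0 = p.1 then f p.1 else 0) = 0 := by
      split_ifs with h
      · rw [← h, h0]
      · rfl
    linarith
  rw [hfirst, hsecond]

lemma sum_mul_diffMatrix (f : Fin N → ℝ) (i : Fin (N - 1)) :
    ∑ p, f p * diffMatrix N p i = f ⟨i.1, by omega⟩ - f ⟨i.1 + 1, by omega⟩ := by
  have hterm : ∀ p, f p * diffMatrix N p i =
      (if p = ⟨i.1, by omega⟩ then f p else 0) -
        (if p = ⟨i.1 + 1, by omega⟩ then f p else 0) := by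
    intro p
    by_cases h1 : p.1 = i.1
    · simp [diffMatrix_apply, h1, Fin.ext_iff]
    by_cases h2 : p.1 = i.1 + 1
    · simp [diffMatrix_apply, h2, Fin.ext_iff]
    simp [diffMatrix_apply, h1, h2, Fin.ext_iff]
  simp only [hterm, sum_sub_distrib, sum_ite_eq', mem_univ, if_true]

/-- Taken on `0, …, N` rather than on `1, …, N-1`, so that it vanishes at both ends and the
differences `Dρ` need no boundary cases. -/
def greenKernel (N a b : ℕ) : ℝ := 2 * (min a b : ℕ) * ((N : ℝ) - (max a b : ℕ)) / N

def greenDiff (N a p : ℕ) : ℝ := (if p < a then 2 else 0) - 2 * a / N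

lemma greenKernel_zero_left (b : ℕ) : greenKernel N 0 b = 0 := by
  simp [greenKernel]

lemma greenKernel_self_left {b : ℕ} (hb : b ≤ N) : greenKernel N N b = 0 := by
  simp [greenKernel, max_eq_left hb]

lemma greenKernel_succ_sub {b p : ℕ} (hp : p < N) :
    greenKernel N (p + 1) b - greenKernel N p b = greenDiff N b p := by
  have hN : (N : ℝ) ≠ 0 := Nat.cast_ne_zero.2 (by omega)
  unfold greenKernel greenDiff
  rcases lt_or_ge p b with h | h
  · rw [if_pos h, min_eq_left (by omega), max_eq_right (by omega), min_eq_left h.le,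
      max_eq_right h.le]
    push_cast
    field_simp
    ring
  · rw [if_neg (by omega), min_eq_right (by omega), max_eq_left (by omega), min_eq_right h,
      max_eq_left h]
    push_cast
    field_simp
    ring

lemma greenDiff_zero_left (p : ℕ) : greenDiff N 0 p = 0 := by
  simp [greenDiff]

lemma greenDiff_self_left {p : ℕ} (hp : p < N) : greenDiff N N p = 0 := by
  have hN : (N : ℝ) ≠ 0 := Nat.cast_ne_zero.2 (by omega)
  simp [greenDiff, hp, hN]

def invReflection (N : ℕ) : Matrix (Fin (N - 1)) (Fin (N - 1)) ℝ := of fun i j =>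
  greenKernel N (i.1 + 1) (j.1 + 1)

lemma invReflection_transpose : (invReflection N)ᵀ = invReflection N := by
  ext i j
  simp [invReflection, greenKernel, min_comm, max_comm]

lemma diffMatrix_mul_invReflection_apply (p : Fin N) (l : Fin (N - 1)) :
    (diffMatrix N * invReflection N) p l = greenDiff N (l.1 + 1) p.1 := by
  rw [mul_apply, ← greenKernel_succ_sub p.isLt]
  exact sum_diffMatrix_mul (f := fun a => greenKernel N a (l.1 + 1))
    (greenKernel_zero_left _) (greenKernel_self_left (by omega)) p

lemma diffMatrix_mul_invReflection_mul_transpose_apply_self (p : Fin N) :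
    (diffMatrix N * invReflection N * (diffMatrix N)ᵀ) p p = 2 - 2 / N := by
  have hN : (N : ℝ) ≠ 0 := Nat.cast_ne_zero.2 p.pos.ne'
  rw [mul_apply]
  simp_rw [diffMatrix_mul_invReflection_apply, transpose_apply, mul_comm (greenDiff _ _ _)]
  rw [sum_diffMatrix_mul (f := fun a => greenDiff N a p.1) (greenDiff_zero_left _)
    (greenDiff_self_left p.isLt)]
  simp only [greenDiff, lt_add_one, if_true, lt_irrefl, if_false]
  push_cast
  field_simp
  ring

def gapCovariance (σ : Fin N → ℝ) : Matrix (Fin (N - 1)) (Fin (N - 1)) ℝ := of fun i j =>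
  if i = j then
    σ ⟨i.1, by have := i.isLt; omega⟩ ^ 2 + σ ⟨i.1 + 1, by have := i.isLt; omega⟩ ^ 2
  else if i.1 + 1 = j.1 ∨ j.1 + 1 = i.1 then
    -σ ⟨max i.1 j.1, by have := i.isLt; have := j.isLt; omega⟩ ^ 2
  else 0

lemma gapCovariance_eq (σ : Fin N → ℝ) :
    gapCovariance σ = (diffMatrix N)ᵀ * diagonal (fun p => σ p ^ 2) * diffMatrix N := by
  ext i j
  rw [mul_apply]
  simp only [mul_diagonal, transpose_apply]
  rw [sum_mul_diffMatrix (fun p => diffMatrix N p i * σ p ^ 2)]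
  simp only [diffMatrix_apply, gapCovariance, of_apply, Fin.ext_iff]
  by_cases hij : i.1 = j.1
  · simp [hij]
  by_cases hsucc : i.1 + 1 = j.1
  · have hmax : max i.1 j.1 = j.1 := by omega
    simp [hij, hsucc, hmax, show j.1 ≠ i.1 by omega, show j.1 + 1 ≠ i.1 by omega]
  by_cases hpred : j.1 + 1 = i.1
  · have hmax : max i.1 j.1 = i.1 := by omega
    simp [hij, hsucc, hpred, hmax, show j.1 ≠ i.1 by omega, show j.1 ≠ i.1 + 1 by omega]
  simp [hij, hsucc, hpred, show j.1 ≠ i.1 by omega, show j.1 ≠ i.1 + 1 by omega]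

lemma trace_invReflection_mul_gapCovariance (σ : Fin N → ℝ) :
    trace (invReflection N * gapCovariance σ) = ∑ p, σ p ^ 2 * (2 - 2 / N) := by
  rw [gapCovariance_eq, ← Matrix.mul_assoc, ← Matrix.mul_assoc, trace_mul_comm,
    ← Matrix.mul_assoc, ← Matrix.mul_assoc]
  simp only [trace, diag_apply, mul_diagonal,
    diffMatrix_mul_invReflection_mul_transpose_apply_self, mul_comm]

lemma invReflection_mul_gapCovariance_mul_apply (σ : Fin N → ℝ) (k l : Fin (N - 1)) :
    (invReflection N * gapCovariance σ * invReflection N) k l =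
      ∑ p, σ p ^ 2 * (greenDiff N (k.1 + 1) p.1 * greenDiff N (l.1 + 1) p.1) := by
  have hfactor : invReflection N * gapCovariance σ * invReflection N =
      (diffMatrix N * invReflection N)ᵀ * diagonal (fun p => σ p ^ 2) *
        (diffMatrix N * invReflection N) := by
    rw [gapCovariance_eq, transpose_mul, invReflection_transpose]
    simp only [Matrix.mul_assoc]
  rw [hfactor, mul_apply]
  simp only [mul_diagonal, transpose_apply, diffMatrix_mul_invReflection_apply]
  exact sum_congr rfl fun p _ => by ring

def collisionWeight (N t s p : ℕ) : ℝ :=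
  2 * ((N : ℝ) + 1) / N - (if p < t then 4 / (t : ℝ) else 0)
    - (if s ≤ p then 4 / ((N : ℝ) - s) else 0)

def collisionCoeff (σ : Fin N → ℝ) (t s : ℕ) : ℝ :=
  ∑ p, σ p ^ 2 * collisionWeight N t s p

lemma collisionWeight_eq {t s : ℕ} (ht : 1 ≤ t) (hts : t ≤ s) (hs : s < N) (p : ℕ) :
    2 - 2 / N - 2 * (greenDiff N t p * greenDiff N s p) / greenKernel N t s =
      collisionWeight N t s p := by
  have hN : (N : ℝ) ≠ 0 := Nat.cast_ne_zero.2 (by omega)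
  have ht0 : (t : ℝ) ≠ 0 := Nat.cast_ne_zero.2 (by omega)
  have hsN : (N : ℝ) - s ≠ 0 := sub_ne_zero.2 (Nat.cast_injective.ne (by omega))
  unfold greenDiff greenKernel collisionWeight
  rw [min_eq_left hts, max_eq_right hts]
  rcases lt_or_ge p t with hpt | htp
  · rw [if_pos hpt, if_pos (by omega), if_pos hpt, if_neg (by omega)]
    field_simp
    ring
  rcases lt_or_ge p s with hps | hsp
  · rw [if_neg (by omega), if_pos hps, if_neg (by omega), if_neg (by omega)]
    field_simp
    ring
  · rw [if_neg (by omega), if_neg (by omega), if_neg (by omega), if_pos hsp]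
    field_simp
    ring

lemma trace_sub_div_eq_collisionCoeff (σ : Fin N → ℝ) {k l : Fin (N - 1)} (hkl : k ≤ l) :
    trace (invReflection N * gapCovariance σ)
        - 2 * (invReflection N * gapCovariance σ * invReflection N) k l / invReflection N k l =
      collisionCoeff σ (k.1 + 1) (l.1 + 1) := by
  rw [trace_invReflection_mul_gapCovariance, invReflection_mul_gapCovariance_mul_apply,
    mul_sum, sum_div, ← sum_sub_distrib]
  refine sum_congr rfl fun p _ => ?_
  rw [← collisionWeight_eq (by omega) (Nat.succ_le_succ hkl) (by omega)]
  simp only [invReflection, of_apply]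
  ring

lemma collisionWeight_nonneg {t s : ℕ} (ht : 2 ≤ t) (hts : t ≤ s) (hs : s + 2 ≤ N)
    (p : ℕ) :
    0 ≤ collisionWeight N t s p := by
  have hN : (0 : ℝ) < N := Nat.cast_pos.2 (by omega)
  have hbase : 2 < 2 * ((N : ℝ) + 1) / N := by
    rw [lt_div_iff₀ hN]; linarith
  have ht4 : 4 / (t : ℝ) ≤ 2 := by
    rw [div_le_iff₀ (by positivity)]
    have : (2 : ℝ) ≤ t := by exact_mod_cast ht
    linarith
  have hs4 : 4 / ((N : ℝ) - s) ≤ 2 := by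
    have : (s : ℝ) + 2 ≤ N := by exact_mod_cast hs
    rw [div_le_iff₀ (by linarith)]
    linarith
  unfold collisionWeight
  split_ifs <;> first | omega | linarith

lemma collisionCoeff_nonneg (σ : Fin N → ℝ) {t s : ℕ} (ht : 2 ≤ t) (hts : t ≤ s)
    (hs : s + 2 ≤ N) :
    0 ≤ collisionCoeff σ t s :=
  sum_nonneg fun p _ => mul_nonneg (sq_nonneg _) (collisionWeight_nonneg ht hts hs p)

lemma forall_collisionCoeff_nonneg_iff (σ : Fin N → ℝ) :
    (∀ k l : Fin (N - 1), k ≤ l → 0 ≤ collisionCoeff σ (k.1 + 1) (l.1 + 1)) ↔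
      ∀ l : Fin (N - 1), 0 ≤ collisionCoeff σ 1 (l.1 + 1) ∧
        (l.1 + 2 < N → 0 ≤ collisionCoeff σ (N - 1 - l.1) (N - 1)) := by
  constructor
  · intro h l
    have hlN := l.isLt
    refine ⟨h ⟨0, by omega⟩ l (Fin.le_iff_val_le_val.2 (Nat.zero_le _)), fun hl => ?_⟩
    have := h ⟨N - 2 - l.1, by omega⟩ ⟨N - 2, by omega⟩ (Fin.mk_le_mk.2 (by omega))
    rwa [show N - 2 - l.1 + 1 = N - 1 - l.1 by omega, show N - 2 + 1 = N - 1 by omega] at this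
  · intro h k l hkl
    have hkl' : k.1 ≤ l.1 := hkl
    by_cases hk : k.1 = 0
    · simpa [hk] using (h l).1
    by_cases hl : l.1 + 2 < N
    · exact collisionCoeff_nonneg σ (by omega) (by omega) (by omega)
    have := (h ⟨N - 2 - k.1, by omega⟩).2 (by simp; omega)
    rw [show N - 1 - (N - 2 - k.1) = k.1 + 1 by omega] at this
    rwa [show l.1 + 1 = N - 1 by omega]

def cpCoeff (α : Fin N → ℝ) (l : Fin (N - 1)) : ℝ :=
  -(2 * ((N : ℝ) - 1) / N) * α ⟨0, by have := l.isLt; omega⟩ ^ 2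
    + 2 * ((N : ℝ) + 1) / N *
      (∑ p ∈ Finset.univ.filter fun p : Fin N => 1 ≤ p.1 ∧ p.1 ≤ l.1, α p ^ 2)
    + (2 * ((N : ℝ) - 1) * ((N : ℝ) - ((l.1 : ℝ) + 1)) - 4 * ((l.1 : ℝ) + 1)) /
      (((N : ℝ) - ((l.1 : ℝ) + 1)) * N) *
      (∑ p ∈ Finset.univ.filter fun p : Fin N => l.1 < p.1, α p ^ 2)

lemma cpCoeff_eq (α : Fin N → ℝ) (l : Fin (N - 1)) :
    cpCoeff α l = collisionCoeff α 1 (l.1 + 1) := by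
  have hl := l.isLt
  have hN : (N : ℝ) ≠ 0 := Nat.cast_ne_zero.2 (by omega)
  have hlN : (N : ℝ) - (l.1 + 1) ≠ 0 := by
    have : (l.1 : ℝ) + 1 < N := by exact_mod_cast (show l.1 + 1 < N by omega)
    linarith
  set p₀ : Fin N := ⟨0, by omega⟩
  have hfirst : α p₀ ^ 2 = ∑ p, if p = p₀ then α p ^ 2 else 0 := by simp
  rw [cpCoeff, hfirst, sum_filter, sum_filter, mul_sum, mul_sum, mul_sum,
    ← sum_add_distrib, ← sum_add_distrib, collisionCoeff]
  refine sum_congr rfl fun p _ => ?_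
  unfold collisionWeight
  by_cases h0 : p = p₀
  · simp only [h0, ↓reduceIte, neg_mul, nonpos_iff_eq_zero, one_ne_zero, zero_le, and_true,
      mul_zero, add_zero, not_lt_zero, Order.lt_one_iff, Nat.cast_one, div_one,
      Nat.add_eq_zero_iff, and_false, sub_zero, p₀]
    field_simp
    ring
  have hp : 1 ≤ p.1 := by
    have : p.1 ≠ 0 := fun h => h0 (Fin.ext h)
    omega
  by_cases hpl : p.1 ≤ l.1
  · simp only [h0, ↓reduceIte, mul_zero, hp, hpl, and_self, zero_add, add_zero, sub_zero,
      show ¬l.1 < p.1 by omega, show ¬p.1 < 1 by omega, show ¬l.1 + 1 ≤ p.1 by omega]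
    ring
  · simp only [h0, ↓reduceIte, mul_zero, hpl, and_false, add_zero, zero_add, sub_zero,
      show l.1 < p.1 by omega, show ¬p.1 < 1 by omega, show l.1 + 1 ≤ p.1 by omega,
      Nat.cast_add, Nat.cast_one]
    field_simp
    ring

lemma collisionWeight_rev {s p : ℕ} (hp : p < N) :
    collisionWeight N 1 s (N - 1 - p) = collisionWeight N (N - s) (N - 1) p := by
  have hN1 : ((N - 1 : ℕ) : ℝ) = N - 1 := by rw [Nat.cast_sub (by omega), Nat.cast_one]
  have hlast : N - 1 - p < 1 ↔ N - 1 ≤ p := by omega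
  have hmid : s ≤ N - 1 - p ↔ p < N - s := by omega
  unfold collisionWeight
  simp only [hlast, hmid]
  have hcast : p < N - s → ((N - s : ℕ) : ℝ) = N - s := fun h => Nat.cast_sub (by omega)
  split_ifs with h₁ h₂ h₂
  · rw [hcast h₂, hN1]; ring
  · rw [hN1]; ring
  · rw [hcast h₂]; ring
  · rfl

lemma collisionCoeff_rev (α : Fin N → ℝ) (s : ℕ) :
    collisionCoeff (fun p => α p.rev) 1 s = collisionCoeff α (N - s) (N - 1) := by
  rw [collisionCoeff, collisionCoeff, ← Equiv.sum_comp Fin.revPerm]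
  refine sum_congr rfl fun p _ => ?_
  rw [Fin.revPerm_apply, Fin.rev_rev, Fin.val_rev, show N - (p.1 + 1) = N - 1 - p.1 by omega,
    collisionWeight_rev p.isLt]

end

/-- The minimum of `c_{k,l}(σ)` over `1 ≤ k ≤ l ≤ N−1` is nonnegative if and only if
`CP(σ) := min(c_1(σ), c_1(σ^←), …, c_{N−2}(σ), c_{N−2}(σ^←), c_{N−1}(σ)) ≥ 0`. -/
theorem min_ckl_nonneg_iff_CP_nonneg (N : ℕ) (hN : 2 ≤ N) (σ : Fin N → ℝ) :
    let A : Matrix (Fin (N - 1)) (Fin (N - 1)) ℝ := fun i j =>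
      if i = j then
        σ ⟨i.1, by have := i.isLt; omega⟩ ^ 2 + σ ⟨i.1 + 1, by have := i.isLt; omega⟩ ^ 2
      else if i.1 + 1 = j.1 ∨ j.1 + 1 = i.1 then
        -σ ⟨max i.1 j.1, by have := i.isLt; have := j.isLt; omega⟩ ^ 2
      else 0
    let ρ : Matrix (Fin (N - 1)) (Fin (N - 1)) ℝ := fun i j =>
      2 * (min (i.1 + 1) (j.1 + 1) : ℕ) * ((N : ℝ) - (max (i.1 + 1) (j.1 + 1) : ℕ)) / N
    -- `c α l` is the quantity `c_l(α)` of the paper, with `M = N` (indices 1-based)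
    let c : (Fin N → ℝ) → Fin (N - 1) → ℝ := fun α l =>
      -(2 * ((N : ℝ) - 1) / N) * α ⟨0, by omega⟩ ^ 2
        + 2 * ((N : ℝ) + 1) / N *
          (∑ p ∈ Finset.univ.filter fun p : Fin N => 1 ≤ p.1 ∧ p.1 ≤ l.1, α p ^ 2)
        + (2 * ((N : ℝ) - 1) * ((N : ℝ) - ((l.1 : ℝ) + 1)) - 4 * ((l.1 : ℝ) + 1)) /
          (((N : ℝ) - ((l.1 : ℝ) + 1)) * N) *
          (∑ p ∈ Finset.univ.filter fun p : Fin N => l.1 < p.1, α p ^ 2)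
    -- the reversed vector `σ^← = (σ_N, …, σ_1)`
    let σrev : Fin N → ℝ := fun p => σ p.rev
    -- `CP(σ)`: minimum of `c_l(σ)` and `c_l(σ^←)` for `l = 1, …, N−2`, and `c_{N−1}(σ)`
    let CP : ℝ := Finset.univ.inf' ⟨⟨0, by omega⟩, Finset.mem_univ _⟩
      fun l : Fin (N - 1) =>
        if l.1 + 2 < N then min (c σ l) (c σrev l) else c σ l
    (0 ≤ (Finset.univ.filter fun p : Fin (N - 1) × Fin (N - 1) => p.1 ≤ p.2).inf'
        ⟨(⟨0, by omega⟩, ⟨0, by omega⟩), by simp⟩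
        fun p =>
          Matrix.trace (ρ * A) - 2 * (ρ * A * ρ) p.1 p.2 / ρ p.1 p.2)
      ↔ 0 ≤ CP := by
  intro A ρ c σrev CP
  have hc : ∀ l, c σ l = collisionCoeff σ 1 (l.1 + 1) := cpCoeff_eq σ
  have hcrev : ∀ l : Fin (N - 1), c σrev l = collisionCoeff σ (N - 1 - l.1) (N - 1) := by
    intro l
    rw [show c σrev l = _ from cpCoeff_eq (fun p => σ p.rev) l, collisionCoeff_rev,
      show N - (l.1 + 1) = N - 1 - l.1 by omega]
  have hentry : ∀ k l : Fin (N - 1), k ≤ l →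
      Matrix.trace (ρ * A) - 2 * (ρ * A * ρ) k l / ρ k l =
        collisionCoeff σ (k.1 + 1) (l.1 + 1) :=
    fun _ _ => trace_sub_div_eq_collisionCoeff σ
  refine (Finset.le_inf'_iff _ _).trans (Iff.trans ?_ (Finset.le_inf'_iff _ _).symm)
  simp only [Finset.mem_filter, Finset.mem_univ, true_and, Prod.forall, forall_const]
  calc _ ↔ ∀ k l : Fin (N - 1), k ≤ l → 0 ≤ collisionCoeff σ (k.1 + 1) (l.1 + 1) :=
        forall₂_congr fun k l => forall_congr' fun hkl => by rw [hentry k l hkl]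
    _ ↔ ∀ l : Fin (N - 1), 0 ≤ collisionCoeff σ 1 (l.1 + 1) ∧
          (l.1 + 2 < N → 0 ≤ collisionCoeff σ (N - 1 - l.1) (N - 1)) :=
        forall_collisionCoeff_nonneg_iff σ
    _ ↔ _ := forall_congr' fun l => by
        split_ifs with hl <;> simp [hc, hcrev, hl]
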